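/- Let k be a perfect field of characteristic p, S̄ = k[[T₁,…,T_d]], σ the Frobenius endomorphism with σ(Tᵢ)=Tᵢᵖ. Let h̄ ∈ S̄ have order exactly p−1 and suppose the initial form of h̄ in the graded ring k[T₁,…,T_d] does not generate an ideal which is a (p−1)-th power. Let C be an S̄-module annihilated by some nonzero f ∈ S̄, equipped with an S̄-linear map φ: C → C^{(σ)} whose cokernel is annihilated by h̄. Then C = 0. -/

import Mathlib

/-!
The hypotheses on `σ` say that `σ f = f ^ p`. Over `σ(S̄)` the ring `S̄` is free on the monomials
`Xᵉ` with all exponents `< p`, so every `g` is `∑ₑ Xᵉ · ψₑ(g) ^ p`. Take an annihilator `g` of `C`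
of least order `u`. Then `g h̄` kills `C^{(σ)}`, hence every component `ψₑ(g h̄)` kills `C` and has
order `≥ u`, which forces `ord (g h̄) ≥ p u`. Since `ord (g h̄) = u + p - 1`, we get `u ≤ 1`.
If `u = 0`, `g` is a unit and `C = 0`. If `u = 1`, the initial form of `g h̄` in degree `p` is
`ℓ ^ p` for the linear form `ℓ = in₁ ψ₀(g h̄)`; so `in₁ g · in_{p-1} h̄ = ℓ ^ p` with `in₁ g`
linear, hence irreducible, and `in_{p-1} h̄` is associated to `(in₁ g) ^ (p - 1)`.
-/

/-- `D`, together with the `σ`-semilinear map `ι : C → D`, is the base change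
`S ⊗_{σ,S} C` of `C` along the ring endomorphism `σ : S → S`. -/
def IsSigmaBaseChange {S : Type} [CommRing S] (σ : S →+* S)
    {C : Type} [AddCommGroup C] [Module S C]
    {D : Type} [AddCommGroup D] [Module S D] (ι : C →ₛₗ[σ] D) : Prop :=
  ∀ (E : Type) [AddCommGroup E] [Module S E] (j : C →ₛₗ[σ] E),
    ∃! g : D →ₗ[S] E, ∀ c : C, g (ι c) = j c

namespace IsSigmaBaseChange

variable {R : Type} [CommRing R]

/-- A copy of `R`, over which `R` is an algebra through `σ`: then `R ⊗[Twisted σ] C` is the base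
change `C^{(σ)}` with its untwisted `R`-module structure. -/
def Twisted (_σ : R →+* R) : Type := R

instance (σ : R →+* R) : CommRing (Twisted σ) := inferInstanceAs (CommRing R)

noncomputable instance (σ : R →+* R) : Algebra (Twisted σ) R := RingHom.toAlgebra (σ : R →+* R)

variable {σ : R →+* R} {C : Type} [AddCommGroup C] [Module R C]
  {D : Type} [AddCommGroup D] [Module R D]

/-- The pairing `a ⊗ c ↦ π a • c` is well defined on `R ⊗_σ C` because `π` is `σ`-semilinear. -/
theorem smul_eq_zero_of_smul_eq_zero {ι : C →ₛₗ[σ] D} (hD : IsSigmaBaseChange σ ι)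
    (π : R →+ R) (hπ : ∀ r a, π (σ r * a) = r * π a) {N : R} {c : C} (hN : N • ι c = 0) :
    π N • c = 0 := by
  let _ : Module (Twisted σ) C := Module.compHom C (RingHom.id R)
  let j : C →ₛₗ[σ] TensorProduct (Twisted σ) R C :=
    { toFun := fun c => (1 : R) ⊗ₜ c
      map_add' := TensorProduct.tmul_add 1
      map_smul' := fun (r : Twisted σ) c => by
        change (1 : R) ⊗ₜ (r • c) = (σ r * 1) ⊗ₜ[Twisted σ] c
        rw [← TensorProduct.smul_tmul, Algebra.smul_def]
        rfl }
  obtain ⟨g, hg, -⟩ := hD _ j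
  let B : R →ₗ[Twisted σ] C →ₗ[Twisted σ] C :=
    LinearMap.mk₂ (Twisted σ) (fun a c => π a • c) (fun a₁ a₂ c => by rw [map_add, add_smul])
      (fun t a c => (congrArg (· • c) (hπ t a)).trans (mul_smul (t : R) (π a) c))
      (fun a c₁ c₂ => smul_add _ c₁ c₂) (fun t a c => smul_comm (π a) (show R from t) c)
  have h : N ⊗ₜ[Twisted σ] c = 0 := by
    calc N ⊗ₜ[Twisted σ] c = N • j c := by
          change _ = N • ((1 : R) ⊗ₜ[Twisted σ] c)
          rw [TensorProduct.smul_tmul', smul_eq_mul, mul_one]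
      _ = g (N • ι c) := by rw [map_smul, hg]
      _ = 0 := by rw [hN, map_zero]
  simpa [B] using congrArg (TensorProduct.lift B) h

end IsSigmaBaseChange

namespace Finsupp

variable {ι : Type*} {p : ℕ}

theorem exists_eq_nsmul_add (hp : p ≠ 0) (m : ι →₀ ℕ) :
    ∃ q r : ι →₀ ℕ, m = p • q + r ∧ ∀ i, r i < p :=
  ⟨m.mapRange (· / p) (Nat.zero_div p), m.mapRange (· % p) (Nat.zero_mod p),
    by ext i; simp [Nat.div_add_mod], fun i => by simpa using Nat.mod_lt _ (Nat.pos_of_ne_zero hp)⟩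

theorem not_dvd_nsmul_add_apply (q : ι →₀ ℕ) {r : ι →₀ ℕ} {i : ι} (hr : r i < p) (hr0 : r i ≠ 0) :
    ¬ p ∣ (p • q + r) i := by
  rw [add_apply, smul_apply, smul_eq_mul, Nat.dvd_add_right (dvd_mul_right p (q i))]
  exact fun h => hr0 (Nat.eq_zero_of_dvd_of_lt h hr)

theorem exists_add_eq_of_nsmul_add_eq {a b n e : ι →₀ ℕ} (he : ∀ i, e i < p)
    (h : p • a + b = p • n + e) : ∃ c, a + c = n ∧ b = p • c + e := by
  have hi (i : ι) : p * a i + b i = p * n i + e i := by simpa using DFunLike.congr_fun h i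
  have ha (i : ι) : a i ≤ n i := by
    by_contra! hlt
    have := Nat.mul_le_mul_left p hlt
    rw [Nat.mul_succ] at this
    linarith [hi i, he i]
  refine ⟨n - a, ?_, ?_⟩ <;> ext i
  · simpa using Nat.add_sub_of_le (ha i)
  · have := hi i
    have := Nat.mul_le_mul_left p (ha i)
    simp only [add_apply, smul_apply, tsub_apply, smul_eq_mul, Nat.mul_sub]
    omega

end Finsupp

namespace MvPolynomial

variable {ι K : Type*} [Field K]

theorem associated_pow_of_mul_eq_pow {g q ℓ : MvPolynomial ι K} {n : ℕ}
    (hg : g.totalDegree = 1) (hℓ : ℓ.totalDegree ≤ 1) (hq : q ≠ 0) (h : g * q = ℓ ^ (n + 1)) :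
    Associated q (g ^ n) := by
  have hg0 : g ≠ 0 := by
    rintro rfl
    simp at hg
  have hirr : Irreducible g := irreducible_of_totalDegree_eq_one hg fun x hx => by
    obtain ⟨m, hm⟩ := ne_zero_iff.1 hg0
    exact isUnit_iff_ne_zero.2 (by rintro rfl; exact hm (zero_dvd_iff.1 (hx m)))
  obtain ⟨w, rfl⟩ : g ∣ ℓ := hirr.prime.dvd_of_dvd_pow ⟨q, h.symm⟩
  have hw0 : w ≠ 0 := by
    rintro rfl
    simp [hg0, hq] at h
  have hw : IsUnit w := by
    have := totalDegree_mul_of_isDomain hg0 hw0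
    have hC : w = C (coeff 0 w) := totalDegree_eq_zero_iff_eq_C.1 (by omega)
    rw [hC] at hw0 ⊢
    exact (isUnit_iff_ne_zero.2 fun h0 => hw0 (by rw [h0, C_0])).map C
  have : q = g ^ n * w ^ (n + 1) := mul_left_cancel₀ hg0 (by rw [h]; ring)
  rw [this]
  exact associated_mul_unit_left _ _ (hw.pow _)

end MvPolynomial

open Finset

namespace MvPowerSeries

theorem le_order_of_mem_span_X_pow {ι k : Type*} [CommRing k] {n : ℕ} {f : MvPowerSeries ι k}
    (hf : f ∈ Ideal.span (Set.range X) ^ n) : (n : ℕ∞) ≤ f.order := by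
  induction n generalizing f with
  | zero => simp
  | succ n ih =>
    rw [pow_succ] at hf
    refine Submodule.mul_induction_on hf (fun a ha b hb => ?_) (fun a b ha hb => ?_)
    · have hX : Ideal.span (Set.range X) ≤ RingHom.ker (constantCoeff (σ := ι) (R := k)) :=
        Ideal.span_le.2 (Set.range_subset_iff.2 fun i => by simp)
      calc ((n + 1 : ℕ) : ℕ∞) = n + 1 := by push_cast; rfl
        _ ≤ a.order + b.order :=
          add_le_add (ih ha) (one_le_order_iff_constCoeff_eq_zero.2 (hX hb))
        _ ≤ (a * b).order := le_order_mul
    · exact (le_min ha hb).trans min_order_le_add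

theorem isUnit_of_order_eq_zero {ι K : Type*} [Field K] {g : MvPowerSeries ι K}
    (h : g.order = 0) : IsUnit g :=
  isUnit_iff_constantCoeff.2 <| isUnit_iff_ne_zero.2 fun h0 =>
    order_ne_zero_iff_constCoeff_eq_zero.2 h0 h

section Frobenius

variable {ι k : Type*} [CommRing k] {p : ℕ} [ExpChar k p]

theorem coeff_nsmul_pow (r : MvPowerSeries ι k) (n : ι →₀ ℕ) :
    coeff (p • n) (r ^ p) = coeff n r ^ p := by
  rw [← map_frobenius_expand p (expChar_ne_zero k p), coeff_map, coeff_expand_smul,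
    frobenius_def]

theorem coeff_pow_eq_zero_of_not_dvd (r : MvPowerSeries ι k) {m : ι →₀ ℕ} {i : ι}
    (h : ¬ p ∣ m i) : coeff m (r ^ p) = 0 := by
  rw [← map_frobenius_expand p (expChar_ne_zero k p), coeff_map,
    coeff_expand_of_not_dvd p _ r h, map_zero]

theorem exists_eq_nsmul_of_coeff_pow_ne_zero {r : MvPowerSeries ι k} {m : ι →₀ ℕ}
    (h : coeff m (r ^ p) ≠ 0) : ∃ a, m = p • a := by
  obtain ⟨q, e, rfl, he⟩ := Finsupp.exists_eq_nsmul_add (expChar_ne_zero k p) m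
  refine ⟨q, ?_⟩
  by_contra hne
  obtain ⟨i, hi⟩ : ∃ i, e i ≠ 0 := by
    by_contra! h0
    exact hne (by rw [show e = 0 from Finsupp.ext h0, add_zero])
  exact h (coeff_pow_eq_zero_of_not_dvd r (Finsupp.not_dvd_nsmul_add_apply q (he i) hi))

theorem apply_eq_pow_of_coeff (σ : MvPowerSeries ι k →+* MvPowerSeries ι k)
    (hσ₁ : ∀ f n, coeff (p • n) (σ f) = coeff n f ^ p)
    (hσ₂ : ∀ f m, (∀ n, m ≠ p • n) → coeff m (σ f) = 0) (f : MvPowerSeries ι k) :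
    σ f = f ^ p := by
  ext m
  by_cases hm : ∃ n, m = p • n
  · obtain ⟨n, rfl⟩ := hm
    rw [hσ₁, coeff_nsmul_pow]
  · rw [not_exists] at hm
    rw [hσ₂ f m hm, eq_comm]
    by_contra h
    obtain ⟨n, hn⟩ := exists_eq_nsmul_of_coeff_pow_ne_zero h
    exact hm n hn

theorem coeff_nsmul_add_pow_mul [DecidableEq ι] {e : ι →₀ ℕ} (he : ∀ i, e i < p)
    (r g : MvPowerSeries ι k) (n : ι →₀ ℕ) :
    coeff (p • n + e) (r ^ p * g) =
      ∑ x ∈ antidiagonal n, coeff x.1 r ^ p * coeff (p • x.2 + e) g := by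
  have hp := expChar_ne_zero k p
  rw [coeff_mul]
  symm
  refine Finset.sum_of_injOn (fun x => (p • x.1, p • x.2 + e)) ?_ ?_ ?_ ?_
  · rintro ⟨a, b⟩ - ⟨a', b'⟩ - h
    simp only [Prod.mk.injEq, add_left_inj, nsmul_right_inj hp] at h
    rw [h.1, h.2]
  · rintro ⟨a, b⟩ hab
    rw [mem_coe, HasAntidiagonal.mem_antidiagonal] at hab ⊢
    rw [← hab, smul_add, add_assoc]
  · rintro ⟨x₁, x₂⟩ hx hnot
    by_contra hne
    obtain ⟨a, rfl⟩ := exists_eq_nsmul_of_coeff_pow_ne_zero (left_ne_zero_of_mul hne)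
    obtain ⟨c, hac, rfl⟩ :=
      Finsupp.exists_add_eq_of_nsmul_add_eq he (HasAntidiagonal.mem_antidiagonal.1 hx)
    exact hnot ⟨(a, c), by simpa using hac, rfl⟩
  · rintro ⟨a, b⟩ -
    rw [coeff_nsmul_pow]

variable [PerfectRing k p]

variable (p) in
/-- For `e` running over the exponents with entries `< p`, these are the coordinates of `g` in
the decomposition `g = ∑ₑ Xᵉ · (frobComponent p e g) ^ p`. -/
noncomputable def frobComponent (e : ι →₀ ℕ) : MvPowerSeries ι k →+ MvPowerSeries ι k where
  toFun g n := (frobeniusEquiv k p).symm (coeff (p • n + e) g)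
  map_zero' := by
    ext n
    change (frobeniusEquiv k p).symm (coeff _ 0) = 0
    simp
  map_add' g h := by
    ext n
    change (frobeniusEquiv k p).symm (coeff _ (g + h)) = (frobeniusEquiv k p).symm (coeff _ g) +
      (frobeniusEquiv k p).symm (coeff _ h)
    simp

theorem coeff_frobComponent (e n : ι →₀ ℕ) (g : MvPowerSeries ι k) :
    coeff n (frobComponent p e g) = (frobeniusEquiv k p).symm (coeff (p • n + e) g) := rfl

theorem coeff_frobComponent_pow (e n : ι →₀ ℕ) (g : MvPowerSeries ι k) :
    coeff n (frobComponent p e g) ^ p = coeff (p • n + e) g :=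
  frobeniusEquiv_symm_pow_p k p _

theorem frobComponent_pow_mul {e : ι →₀ ℕ} (he : ∀ i, e i < p) (r g : MvPowerSeries ι k) :
    frobComponent p e (r ^ p * g) = r * frobComponent p e g := by
  classical
  ext n
  simp only [coeff_frobComponent, coeff_nsmul_add_pow_mul he, map_sum, map_mul, coeff_mul]
  refine Finset.sum_congr rfl fun x _ => ?_
  rw [← frobenius_def, frobeniusEquiv_symm_apply_frobenius]

theorem coeff_nsmul_add_eq_zero_of_le_order_frobComponent {g : MvPowerSeries ι k} {n : ℕ}
    (hg : ∀ e : ι →₀ ℕ, (∀ i, e i < p) → (n : ℕ∞) ≤ (frobComponent p e g).order)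
    {q e : ι →₀ ℕ} (he : ∀ i, e i < p) (hq : q.degree < n) : coeff (p • q + e) g = 0 := by
  rw [← coeff_frobComponent_pow, coeff_of_lt_order ((Nat.cast_lt.2 hq).trans_le (hg e he)),
    zero_pow (expChar_ne_zero k p)]

theorem nat_mul_le_order_of_le_order_frobComponent {g : MvPowerSeries ι k} {n : ℕ}
    (hg : ∀ e : ι →₀ ℕ, (∀ i, e i < p) → (n : ℕ∞) ≤ (frobComponent p e g).order) :
    ((p * n : ℕ) : ℕ∞) ≤ g.order := by
  refine nat_le_order fun m hm => ?_
  obtain ⟨q, e, rfl, he⟩ := Finsupp.exists_eq_nsmul_add (expChar_ne_zero k p) m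
  rw [map_add, map_nsmul, smul_eq_mul] at hm
  exact coeff_nsmul_add_eq_zero_of_le_order_frobComponent hg he
    (Nat.lt_of_mul_lt_mul_left (a := p) (by omega))

end Frobenius

theorem frobComponent_mem_annihilator_of_isSigmaBaseChange {ι k : Type} [CommRing k] {p : ℕ}
    [ExpChar k p] [PerfectRing k p] {σ : MvPowerSeries ι k →+* MvPowerSeries ι k}
    (hσ : ∀ r, σ r = r ^ p) {C D : Type} [AddCommGroup C] [Module (MvPowerSeries ι k) C]
    [AddCommGroup D] [Module (MvPowerSeries ι k) D] {j : C →ₛₗ[σ] D} (hD : IsSigmaBaseChange σ j)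
    {N : MvPowerSeries ι k} (hN : ∀ c, N • j c = 0) {e : ι →₀ ℕ} (he : ∀ i, e i < p) :
    frobComponent p e N ∈ Module.annihilator (MvPowerSeries ι k) C :=
  Module.mem_annihilator.2 fun c => hD.smul_eq_zero_of_smul_eq_zero _
    (fun r a => by rw [hσ, frobComponent_pow_mul he]) (hN c)

section InitialForm

variable {ι k : Type*} [Finite ι] [CommRing k]

noncomputable def initialForm (n : ℕ) (g : MvPowerSeries ι k) : MvPolynomial ι k :=
  MvPolynomial.homogeneousComponent n (truncTotal (n + 1) g)

theorem coeff_initialForm (n : ℕ) (g : MvPowerSeries ι k) (m : ι →₀ ℕ) :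
    MvPolynomial.coeff m (initialForm n g) = if m.degree = n then coeff m g else 0 := by
  rw [initialForm, MvPolynomial.coeff_homogeneousComponent, coeff_truncTotal_eq_ite]
  split_ifs <;> first | rfl | omega

theorem isHomogeneous_initialForm (n : ℕ) (g : MvPowerSeries ι k) :
    (initialForm n g).IsHomogeneous n :=
  MvPolynomial.homogeneousComponent_isHomogeneous _ _

theorem coe_initialForm (n : ℕ) (g : MvPowerSeries ι k) :
    (initialForm n g : MvPowerSeries ι k) = homogeneousComponent n g := by
  ext m
  rw [MvPolynomial.coeff_coe, coeff_initialForm, coeff_homogeneousComponent]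

theorem initialForm_mul {a b : ℕ} {x y : MvPowerSeries ι k} (hx : (a : ℕ∞) ≤ x.order)
    (hy : (b : ℕ∞) ≤ y.order) :
    initialForm (a + b) (x * y) = initialForm a x * initialForm b y :=
  MvPolynomial.coe_injective _ _ <| by
    rw [MvPolynomial.coe_mul, coe_initialForm, coe_initialForm, coe_initialForm,
      homogeneousComponent_mul_of_le_order hx hy]

theorem initialForm_ne_zero {n : ℕ} {g : MvPowerSeries ι k} (h : g.order = n) :
    initialForm n g ≠ 0 := fun h0 =>
  homogeneousComponent_of_order h.symm (by rw [← coe_initialForm, h0, MvPolynomial.coe_zero])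

theorem order_le_of_initialForm_ne_zero {n : ℕ} {g : MvPowerSeries ι k}
    (h : initialForm n g ≠ 0) : g.order ≤ n := by
  obtain ⟨m, hm⟩ := MvPolynomial.ne_zero_iff.1 h
  rw [coeff_initialForm] at hm
  split_ifs at hm with hdeg
  · exact hdeg ▸ order_le hm
  · exact absurd rfl hm

theorem initialForm_nat_mul_eq_pow {p : ℕ} [ExpChar k p] [PerfectRing k p]
    {g : MvPowerSeries ι k} {n : ℕ}
    (hg : ∀ e : ι →₀ ℕ, (∀ i, e i < p) → (n : ℕ∞) ≤ (frobComponent p e g).order) :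
    initialForm (p * n) g = initialForm n (frobComponent p 0 g) ^ p := by
  have hp := expChar_ne_zero k p
  ext m
  rw [← MvPolynomial.map_frobenius_expand, MvPolynomial.coeff_map, coeff_initialForm]
  obtain ⟨q, e, rfl, he⟩ := Finsupp.exists_eq_nsmul_add hp m
  rw [map_add, map_nsmul, smul_eq_mul]
  by_cases he0 : e = 0
  · subst he0
    rw [← coeff_frobComponent_pow, add_zero, MvPolynomial.coeff_expand_smul p hp,
      coeff_initialForm]
    simp [apply_ite (frobenius k p), hp, frobenius_def]
  · obtain ⟨i, hi⟩ : ∃ i, e i ≠ 0 := by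
      by_contra! h
      exact he0 (Finsupp.ext h)
    rw [MvPolynomial.coeff_expand_of_not_dvd _ (Finsupp.not_dvd_nsmul_add_apply q (he i) hi),
      map_zero, ite_eq_right_iff]
    have := (Finsupp.degree_eq_zero_iff e).not.2 he0
    exact fun hdeg => coeff_nsmul_add_eq_zero_of_le_order_frobComponent hg he
      (Nat.lt_of_mul_lt_mul_left (a := p) (by omega))

end InitialForm

theorem associated_initialForm_pow {ι k : Type*} [Finite ι] [Field k] {p : ℕ} [ExpChar k p]
    [PerfectRing k p] {g h : MvPowerSeries ι k} (hg : g.order = 1) (hh : h.order = (p - 1 : ℕ))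
    (hgh : ∀ e : ι →₀ ℕ, (∀ i, e i < p) → 1 ≤ (frobComponent p e (g * h)).order) :
    Associated (initialForm (p - 1) h) (initialForm 1 g ^ (p - 1)) := by
  have hp := expChar_ne_zero k p
  have hgh' (e : ι →₀ ℕ) (he : ∀ i, e i < p) :
      ((1 : ℕ) : ℕ∞) ≤ (frobComponent p e (g * h)).order := by
    exact_mod_cast hgh e he
  refine MvPolynomial.associated_pow_of_mul_eq_pow
    ((isHomogeneous_initialForm 1 g).totalDegree (initialForm_ne_zero (by exact_mod_cast hg)))
    (isHomogeneous_initialForm 1 (frobComponent p 0 (g * h))).totalDegree_le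
    (initialForm_ne_zero hh) ?_
  rw [← initialForm_mul (by exact_mod_cast hg.ge) hh.ge, Nat.sub_add_cancel (by omega),
    show 1 + (p - 1) = p * 1 by omega, initialForm_nat_mul_eq_pow hgh']

end MvPowerSeries

open MvPowerSeries

theorem statement1_general (p : ℕ) (hp : p.Prime) (k : Type) [Field k] [ExpChar k p]
    [PerfectRing k p] (d : ℕ)
    (σ : MvPowerSeries (Fin d) k →+* MvPowerSeries (Fin d) k)
    (hσ1 : ∀ (f : MvPowerSeries (Fin d) k) (n : (Fin d) →₀ ℕ),
      MvPowerSeries.coeff (p • n) (σ f) = (MvPowerSeries.coeff n f) ^ p)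
    (hσ2 : ∀ (f : MvPowerSeries (Fin d) k) (m : (Fin d) →₀ ℕ),
      (∀ n : (Fin d) →₀ ℕ, m ≠ p • n) → MvPowerSeries.coeff m (σ f) = 0)
    (hbar : MvPowerSeries (Fin d) k)
    (hord1 : hbar ∈ (Ideal.span (Set.range (MvPowerSeries.X : Fin d → MvPowerSeries (Fin d) k))) ^ (p - 1))
    -- the initial form of `hbar` (the degree-`(p-1)` homogeneous component, viewed in
    -- `k[T₁,…,T_d] = gr S̄`) does not generate an ideal which is a `(p−1)`-th power:
    (hinit : ∀ q : MvPolynomial (Fin d) k,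
      (∀ n : (Fin d) →₀ ℕ, MvPolynomial.coeff n q =
        if (n.sum fun _ m => m) = p - 1 then MvPowerSeries.coeff n hbar else 0) →
      ¬ ∃ f : MvPolynomial (Fin d) k, Ideal.span {q} = Ideal.span {f ^ (p - 1)})
    (C : Type) [AddCommGroup C] [Module (MvPowerSeries (Fin d) k) C]
    (f : MvPowerSeries (Fin d) k) (hf : f ≠ 0) (hfC : ∀ c : C, f • c = 0)
    (D : Type) [AddCommGroup D] [Module (MvPowerSeries (Fin d) k) D]
    (ι : C →ₛₗ[σ] D) (hD : IsSigmaBaseChange σ ι)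
    (φ : C →ₗ[MvPowerSeries (Fin d) k] D)
    (hcoker : ∀ x : D, ∃ c : C, hbar • x = φ c) :
    Subsingleton C := by
  have hp2 := hp.two_le
  have hq : initialForm (p - 1) hbar ≠ 0 := fun h0 =>
    hinit _ (coeff_initialForm _ _) ⟨0, by rw [h0, zero_pow (by omega)]⟩
  have hhbar : hbar.order = (p - 1 : ℕ) :=
    le_antisymm (order_le_of_initialForm_ne_zero hq) (le_order_of_mem_span_X_pow hord1)
  set I := Module.annihilator (MvPowerSeries (Fin d) k) C
  obtain ⟨g, hgI, hgmin⟩ : ∃ g ∈ I, ∀ h ∈ I, g.order ≤ h.order :=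
    ⟨Function.argminOn order (I : Set _) ⟨0, I.zero_mem⟩, Function.argminOn_mem _ _ _,
      fun h hh => Function.argminOn_le order _ hh⟩
  obtain ⟨u, hu⟩ : ∃ u : ℕ, g.order = u := (ENat.ne_top_iff_exists.1 (ne_top_of_le_ne_top
    (order_eq_top_iff.not.2 hf) (hgmin f (Module.mem_annihilator.2 hfC)))).imp fun _ => Eq.symm
  have hN (c : C) : (g * hbar) • ι c = 0 := by
    obtain ⟨c', hc'⟩ := hcoker (ι c)
    rw [mul_smul, hc', ← map_smul, Module.mem_annihilator.1 hgI, map_zero]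
  have hcomp (e : Fin d →₀ ℕ) (he : ∀ i, e i < p) :
      (u : ℕ∞) ≤ (frobComponent p e (g * hbar)).order :=
    hu ▸ hgmin _ (frobComponent_mem_annihilator_of_isSigmaBaseChange
      (apply_eq_pow_of_coeff σ hσ1 hσ2) hD hN he)
  have hu1 : u ≤ 1 := by
    have h := nat_mul_le_order_of_le_order_frobComponent hcomp
    rw [order_mul, hu, hhbar] at h
    norm_cast at h
    exact Nat.le_of_mul_le_mul_left (c := p - 1) (by rw [Nat.sub_one_mul]; omega) (by omega)
  interval_cases u
  · exact Module.annihilator_eq_top_iff.1 (I.eq_top_of_isUnit_mem hgI (isUnit_of_order_eq_zero hu))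
  · exact (hinit _ (coeff_initialForm _ _) ⟨initialForm 1 g,
      Ideal.span_singleton_eq_span_singleton.2 (associated_initialForm_pow (by exact_mod_cast hu)
        hhbar (by exact_mod_cast hcomp))⟩).elim

/-- `k` perfect of characteristic `p`, `S̄ = k[[T₁,…,T_d]]`,
`σ` the Frobenius with `σ(Tᵢ) = Tᵢᵖ`.  Let `h̄` have order exactly `p−1` and
suppose its initial form in `k[T₁,…,T_d]` does not generate an ideal which is a
`(p−1)`-th power.  If `C` is an `S̄`-module annihilated by some nonzero `f`,
with an `S̄`-linear map `φ : C → C^{(σ)}` whose cokernel is annihilated by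
`h̄`, then `C = 0`. -/
theorem statement1 (p : ℕ) (hp : p.Prime) (k : Type) [Field k] [CharP k p] [ExpChar k p]
    [PerfectRing k p] (d : ℕ)
    (σ : MvPowerSeries (Fin d) k →+* MvPowerSeries (Fin d) k)
    (hσ1 : ∀ (f : MvPowerSeries (Fin d) k) (n : (Fin d) →₀ ℕ),
      MvPowerSeries.coeff (p • n) (σ f) = (MvPowerSeries.coeff n f) ^ p)
    (hσ2 : ∀ (f : MvPowerSeries (Fin d) k) (m : (Fin d) →₀ ℕ),
      (∀ n : (Fin d) →₀ ℕ, m ≠ p • n) → MvPowerSeries.coeff m (σ f) = 0)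
    (hbar : MvPowerSeries (Fin d) k)
    (hord1 : hbar ∈ (Ideal.span (Set.range (MvPowerSeries.X : Fin d → MvPowerSeries (Fin d) k))) ^ (p - 1))
    (hord2 : hbar ∉ (Ideal.span (Set.range (MvPowerSeries.X : Fin d → MvPowerSeries (Fin d) k))) ^ p)
    -- the initial form of `hbar` (the degree-`(p-1)` homogeneous component, viewed in
    -- `k[T₁,…,T_d] = gr S̄`) does not generate an ideal which is a `(p−1)`-th power:
    (hinit : ∀ q : MvPolynomial (Fin d) k,
      (∀ n : (Fin d) →₀ ℕ, MvPolynomial.coeff n q =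
        if (n.sum fun _ m => m) = p - 1 then MvPowerSeries.coeff n hbar else 0) →
      ¬ ∃ f : MvPolynomial (Fin d) k, Ideal.span {q} = Ideal.span {f ^ (p - 1)})
    (C : Type) [AddCommGroup C] [Module (MvPowerSeries (Fin d) k) C]
    (f : MvPowerSeries (Fin d) k) (hf : f ≠ 0) (hfC : ∀ c : C, f • c = 0)
    (D : Type) [AddCommGroup D] [Module (MvPowerSeries (Fin d) k) D]
    (ι : C →ₛₗ[σ] D) (hD : IsSigmaBaseChange σ ι)
    (φ : C →ₗ[MvPowerSeries (Fin d) k] D)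
    (hcoker : ∀ x : D, ∃ c : C, hbar • x = φ c) :
    Subsingleton C :=
  statement1_general p hp k d σ hσ1 hσ2 hbar hord1 hinit C f hf hfC D ι hD φ hcoker
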